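/- arXiv:1702.06787 — 3 statements merged into one kernel-verified Lean document; each statement's English description precedes it below -/
import Mathlib

section
/- Let H be a separable infinite-dimensional real Hilbert space, ℓ ∈ ℕ, F : H → ℝ^ℓ a continuous linear operator, y ∈ ℝ^ℓ, and λ ≥ 0. Suppose a sequence is defined by F₀ ∈ H, R⁰ = y − F F₀, and for each n, Fₙ₊₁ = Fₙ + αₙ₊₁ dₙ₊₁ and Rⁿ⁺¹ = Rⁿ − αₙ₊₁ F dₙ₊₁, where dₙ₊₁ ∈ H \ {0} and αₙ₊₁ = (⟨Rⁿ, F dₙ₊₁⟩ − λ⟨Fₙ, dₙ₊₁⟩) / (‖F dₙ₊₁‖² + λ‖dₙ₊₁‖²). Then for all n ≥ 1: ‖Rⁿ‖² + λ‖Fₙ‖² = ‖Rⁿ⁻¹‖² + λ‖Fₙ₋₁‖² − (⟨Rⁿ⁻¹, F dₙ⟩ − λ⟨Fₙ₋₁, dₙ⟩)² / (‖F dₙ‖² + λ‖dₙ‖²). -/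
open RealInnerProductSpace

section RegularizedGreedyStep

variable {E G : Type*} [NormedAddCommGroup E] [InnerProductSpace ℝ E]
  [NormedAddCommGroup G] [InnerProductSpace ℝ G]

theorem norm_sub_smul_sq_add_mul_norm_add_smul_sq (r v : G) (x d : E) (lam α : ℝ) :
    ‖r - α • v‖ ^ 2 + lam * ‖x + α • d‖ ^ 2 =
      ‖r‖ ^ 2 + lam * ‖x‖ ^ 2 - 2 * α * (⟪r, v⟫ - lam * ⟪x, d⟫) +
        α ^ 2 * (‖v‖ ^ 2 + lam * ‖d‖ ^ 2) := by
  rw [norm_sub_sq_real, norm_add_sq_real, inner_smul_right, inner_smul_right,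
    norm_smul, norm_smul, mul_pow, mul_pow, Real.norm_eq_abs, sq_abs]
  ring

theorem norm_sub_smul_sq_add_mul_norm_add_smul_sq_of_optimal_step (r v : G) (x d : E)
    (lam α : ℝ) (hD : ‖v‖ ^ 2 + lam * ‖d‖ ^ 2 ≠ 0)
    (hα : α = (⟪r, v⟫ - lam * ⟪x, d⟫) / (‖v‖ ^ 2 + lam * ‖d‖ ^ 2)) :
    ‖r - α • v‖ ^ 2 + lam * ‖x + α • d‖ ^ 2 =
      ‖r‖ ^ 2 + lam * ‖x‖ ^ 2 -
        (⟪r, v⟫ - lam * ⟪x, d⟫) ^ 2 / (‖v‖ ^ 2 + lam * ‖d‖ ^ 2) := by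
  rw [norm_sub_smul_sq_add_mul_norm_add_smul_sq, hα]
  field_simp
  ring

end RegularizedGreedyStep

theorem rfmp_energy_identity_general
    {H : Type*} [NormedAddCommGroup H] [InnerProductSpace ℝ H]
    {ℓ : ℕ} (T : H →L[ℝ] EuclideanSpace ℝ (Fin ℓ))
    (lam : ℝ)
    (f : ℕ → H) (R : ℕ → EuclideanSpace ℝ (Fin ℓ)) (d : ℕ → H) (α : ℕ → ℝ)
    (hden : ∀ n : ℕ, 0 < ‖T (d (n + 1))‖ ^ 2 + lam * ‖d (n + 1)‖ ^ 2)
    (hα : ∀ n : ℕ, α (n + 1) =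
      (⟪R n, T (d (n + 1))⟫ - lam * ⟪f n, d (n + 1)⟫) /
        (‖T (d (n + 1))‖ ^ 2 + lam * ‖d (n + 1)‖ ^ 2))
    (hf : ∀ n : ℕ, f (n + 1) = f n + α (n + 1) • d (n + 1))
    (hR : ∀ n : ℕ, R (n + 1) = R n - α (n + 1) • T (d (n + 1))) :
    ∀ n : ℕ,
      ‖R (n + 1)‖ ^ 2 + lam * ‖f (n + 1)‖ ^ 2 =
        ‖R n‖ ^ 2 + lam * ‖f n‖ ^ 2 -
          (⟪R n, T (d (n + 1))⟫ - lam * ⟪f n, d (n + 1)⟫) ^ 2 /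
            (‖T (d (n + 1))‖ ^ 2 + lam * ‖d (n + 1)‖ ^ 2) := by
  intro n
  rw [hR n, hf n]
  exact norm_sub_smul_sq_add_mul_norm_add_smul_sq_of_optimal_step _ _ _ _ _ _ (hden n).ne' (hα n)

theorem rfmp_energy_identity
    {H : Type*} [NormedAddCommGroup H] [InnerProductSpace ℝ H] [CompleteSpace H]
    [TopologicalSpace.SeparableSpace H] (hinf : ¬ FiniteDimensional ℝ H)
    {ℓ : ℕ} (T : H →L[ℝ] EuclideanSpace ℝ (Fin ℓ))
    (y : EuclideanSpace ℝ (Fin ℓ)) (lam : ℝ) (hlam : 0 ≤ lam)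
    (f : ℕ → H) (R : ℕ → EuclideanSpace ℝ (Fin ℓ)) (d : ℕ → H) (α : ℕ → ℝ)
    (hd : ∀ n : ℕ, d (n + 1) ≠ 0)
    (hden : ∀ n : ℕ, 0 < ‖T (d (n + 1))‖ ^ 2 + lam * ‖d (n + 1)‖ ^ 2)
    (hR0 : R 0 = y - T (f 0))
    (hα : ∀ n : ℕ, α (n + 1) =
      (⟪R n, T (d (n + 1))⟫ - lam * ⟪f n, d (n + 1)⟫) /
        (‖T (d (n + 1))‖ ^ 2 + lam * ‖d (n + 1)‖ ^ 2))
    (hf : ∀ n : ℕ, f (n + 1) = f n + α (n + 1) • d (n + 1))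
    (hR : ∀ n : ℕ, R (n + 1) = R n - α (n + 1) • T (d (n + 1))) :
    ∀ n : ℕ,
      ‖R (n + 1)‖ ^ 2 + lam * ‖f (n + 1)‖ ^ 2 =
        ‖R n‖ ^ 2 + lam * ‖f n‖ ^ 2 -
          (⟪R n, T (d (n + 1))⟫ - lam * ⟪f n, d (n + 1)⟫) ^ 2 /
            (‖T (d (n + 1))‖ ^ 2 + lam * ‖d (n + 1)‖ ^ 2) :=
  rfmp_energy_identity_general T lam f R d α hden hα hf hR
end

section
/- Let H be a Hilbert space, F : H → ℝ^ℓ bounded linear, y ∈ ℝ^ℓ. Suppose (Fₙ) converges strongly to F∞ in H, Rⁿ := y − F Fₙ, and ⟨Rⁿ, F d⟩ → 0 for every d in a set D ⊂ H with span(F D) = ran F. Then F F∞ = P_{ran F} y, where P_{ran F} is the orthogonal projection of ℝ^ℓ onto ran F. -/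
/-!
In the limit the residual `y - T Finf` is orthogonal to every `T d`, hence to their span `range T`;
as `T Finf` lies in `range T`, it is the orthogonal projection of `y`.
-/

open RealInnerProductSpace Filter Topology

section InnerProduct

variable {𝕜 E : Type*} [RCLike 𝕜] [NormedAddCommGroup E] [InnerProductSpace 𝕜 E]

local notation "⟪" x ", " y "⟫" => inner 𝕜 x y

theorem inner_eq_zero_of_tendsto {ι : Type*} {l : Filter ι} [l.NeBot] {u : ι → E} {r v : E}
    (hu : Tendsto u l (𝓝 r)) (hv : Tendsto (fun i => ⟪u i, v⟫) l (𝓝 0)) : ⟪r, v⟫ = 0 :=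
  tendsto_nhds_unique (hu.inner tendsto_const_nhds) hv

theorem Submodule.mem_orthogonal_span_of_inner_eq_zero {s : Set E} {x : E}
    (h : ∀ v ∈ s, ⟪v, x⟫ = 0) : x ∈ (Submodule.span 𝕜 s)ᗮ := by
  have hortho : Submodule.span 𝕜 {x} ⟂ Submodule.span 𝕜 s :=
    Submodule.isOrtho_span.2 fun u hu v hv => by
      rw [Set.mem_singleton_iff.1 hu, inner_eq_zero_symm]
      exact h v hv
  exact Submodule.isOrtho_iff_le.1 hortho (Submodule.mem_span_singleton_self x)

theorem Submodule.eq_starProjection_of_mem_of_inner_span_eq_zero {K : Submodule 𝕜 E}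
    [K.HasOrthogonalProjection] {s : Set E} (hs : Submodule.span 𝕜 s = K) {u v : E}
    (hv : v ∈ K) (h : ∀ w ∈ s, ⟪w, u - v⟫ = 0) : K.starProjection u = v :=
  K.eq_starProjection_of_mem_orthogonal hv (hs ▸ mem_orthogonal_span_of_inner_eq_zero h)

end InnerProduct

theorem rfmp_unregularized_limit_projection_general
    {H : Type*} [NormedAddCommGroup H] [InnerProductSpace ℝ H]
    {ℓ : ℕ} (T : H →L[ℝ] EuclideanSpace ℝ (Fin ℓ))
    (y : EuclideanSpace ℝ (Fin ℓ))
    (f : ℕ → H) (Finf : H) (hconv : Tendsto f atTop (𝓝 Finf))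
    (R : ℕ → EuclideanSpace ℝ (Fin ℓ)) (hR : ∀ n : ℕ, R n = y - T (f n))
    (D : Set H)
    (hD : ∀ d ∈ D, Tendsto (fun n : ℕ => ⟪R n, T d⟫) atTop (𝓝 0))
    (hspan : Submodule.span ℝ (T '' D) = LinearMap.range (T : H →ₗ[ℝ] EuclideanSpace ℝ (Fin ℓ))) :
    T Finf = (Submodule.orthogonalProjectionOnto (LinearMap.range (T : H →ₗ[ℝ] EuclideanSpace ℝ (Fin ℓ))) y : EuclideanSpace ℝ (Fin ℓ)) := by
  have hR_lim : Tendsto R atTop (𝓝 (y - T Finf)) := by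
    rw [funext hR]
    exact tendsto_const_nhds.sub ((T.continuous.tendsto Finf).comp hconv)
  rw [← Submodule.starProjection_apply]
  refine (Submodule.eq_starProjection_of_mem_of_inner_span_eq_zero hspan ⟨Finf, rfl⟩ ?_).symm
  rintro _ ⟨d, hd, rfl⟩
  rw [real_inner_comm]
  exact inner_eq_zero_of_tendsto hR_lim (hD d hd)

theorem rfmp_unregularized_limit_projection
    {H : Type*} [NormedAddCommGroup H] [InnerProductSpace ℝ H] [CompleteSpace H]
    {ℓ : ℕ} (T : H →L[ℝ] EuclideanSpace ℝ (Fin ℓ))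
    (y : EuclideanSpace ℝ (Fin ℓ))
    (f : ℕ → H) (Finf : H) (hconv : Tendsto f atTop (𝓝 Finf))
    (R : ℕ → EuclideanSpace ℝ (Fin ℓ)) (hR : ∀ n : ℕ, R n = y - T (f n))
    (D : Set H)
    (hD : ∀ d ∈ D, Tendsto (fun n : ℕ => ⟪R n, T d⟫) atTop (𝓝 0))
    (hspan : Submodule.span ℝ (T '' D) = LinearMap.range (T : H →ₗ[ℝ] EuclideanSpace ℝ (Fin ℓ))) :
    T Finf = (Submodule.orthogonalProjectionOnto (LinearMap.range (T : H →ₗ[ℝ] EuclideanSpace ℝ (Fin ℓ))) y : EuclideanSpace ℝ (Fin ℓ)) :=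
  rfmp_unregularized_limit_projection_general T y f Finf hconv R hR D hD hspan
end

section
/- Under the RFMP iteration with λ = 0, a bounded dictionary (sup ‖d‖ = C₂ < ∞), and αₙ → 0, it holds that ⟨Rⁿ, F d⟩ → 0 as n → ∞ for every d ∈ D with F d ≠ 0. -/
/-! By greedy maximality of `dₙ₊₁`,
`|⟪Rⁿ, T e⟫| / ‖T e‖ ≤ |⟪Rⁿ, T dₙ₊₁⟫| / ‖T dₙ₊₁‖ = |αₙ₊₁| ‖T dₙ₊₁‖ ≤ |αₙ₊₁| ‖T‖ C₂`,
and the right-hand side tends to zero. -/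

open RealInnerProductSpace Filter Topology

lemma abs_le_mul_of_sq_div_sq_le {a b x y : ℝ} (hx : 0 < x) (hy : 0 < y)
    (h : a ^ 2 / x ^ 2 ≤ b ^ 2 / y ^ 2) : |a| ≤ |b / y ^ 2| * y * x := by
  have hratio : |a| / x ≤ |b| / y := by
    rw [← pow_le_pow_iff_left₀ (by positivity) (by positivity) two_ne_zero]
    simpa only [div_pow, sq_abs] using h
  calc |a| = |a| / x * x := (div_mul_cancel₀ _ hx.ne').symm
    _ ≤ |b| / y * x := by gcongr
    _ = |b / y ^ 2| * y * x := by
        rw [abs_div, abs_of_pos (pow_pos hy 2)]; field_simp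

section Greedy

variable {E : Type*} [NormedAddCommGroup E] [InnerProductSpace ℝ E]

theorem tendsto_inner_zero_of_greedy {r v : ℕ → E} {B : ℝ} (hv : ∀ n, v n ≠ 0)
    (hvB : ∀ n, ‖v n‖ ≤ B) {u : E} (hu : u ≠ 0)
    (hgreedy : ∀ n, ⟪r n, u⟫ ^ 2 / ‖u‖ ^ 2 ≤ ⟪r n, v n⟫ ^ 2 / ‖v n‖ ^ 2)
    (hcoeff : Tendsto (fun n => ⟪r n, v n⟫ / ‖v n‖ ^ 2) atTop (𝓝 0)) :
    Tendsto (fun n => ⟪r n, u⟫) atTop (𝓝 0) := by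
  have hbound : ∀ n, ‖⟪r n, u⟫‖ ≤ |⟪r n, v n⟫ / ‖v n‖ ^ 2| * (B * ‖u‖) := fun n =>
    calc ‖⟪r n, u⟫‖ ≤ |⟪r n, v n⟫ / ‖v n‖ ^ 2| * ‖v n‖ * ‖u‖ :=
          abs_le_mul_of_sq_div_sq_le (norm_pos_iff.2 hu) (norm_pos_iff.2 (hv n)) (hgreedy n)
      _ ≤ |⟪r n, v n⟫ / ‖v n‖ ^ 2| * (B * ‖u‖) := by
          rw [mul_assoc]; gcongr; exact hvB n
  simpa using squeeze_zero_norm hbound (by simpa using hcoeff.abs.mul_const (B * ‖u‖))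

end Greedy

theorem rfmp_unregularized_residual_inner_tendsto_zero_general
    {H : Type*} [NormedAddCommGroup H] [InnerProductSpace ℝ H]
    {ℓ : ℕ} (T : H →L[ℝ] EuclideanSpace ℝ (Fin ℓ))
    (D : Set H)
    (C₂ : ℝ) (hC₂ : ∀ d ∈ D, ‖d‖ ≤ C₂)
    (R : ℕ → EuclideanSpace ℝ (Fin ℓ)) (d : ℕ → H) (α : ℕ → ℝ)
    (hdmem : ∀ n : ℕ, d (n + 1) ∈ D)
    (hdne : ∀ n : ℕ, T (d (n + 1)) ≠ 0)
    (hgreedy : ∀ n : ℕ, ∀ e ∈ D, T e ≠ 0 →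
      (⟪R n, T e⟫) ^ 2 / ‖T e‖ ^ 2 ≤
        (⟪R n, T (d (n + 1))⟫) ^ 2 / ‖T (d (n + 1))‖ ^ 2)
    (hα : ∀ n : ℕ, α (n + 1) = ⟪R n, T (d (n + 1))⟫ / ‖T (d (n + 1))‖ ^ 2)
    (hα0 : Tendsto (fun n : ℕ => α (n + 1)) atTop (𝓝 0)) :
    ∀ e ∈ D, T e ≠ 0 →
      Tendsto (fun n : ℕ => ⟪R n, T e⟫) atTop (𝓝 0) := by
  intro e he hTe
  refine tendsto_inner_zero_of_greedy hdne (B := ‖T‖ * C₂)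
    (fun n => T.le_opNorm_of_le (hC₂ _ (hdmem n))) hTe (fun n => hgreedy n e he hTe) ?_
  simpa only [hα] using hα0

theorem rfmp_unregularized_residual_inner_tendsto_zero
    {H : Type*} [NormedAddCommGroup H] [InnerProductSpace ℝ H] [CompleteSpace H]
    {ℓ : ℕ} (T : H →L[ℝ] EuclideanSpace ℝ (Fin ℓ))
    (y : EuclideanSpace ℝ (Fin ℓ))
    (D : Set H) (hD0 : ∀ d ∈ D, d ≠ (0 : H))
    (C₂ : ℝ) (hC₂ : ∀ d ∈ D, ‖d‖ ≤ C₂)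
    (f : ℕ → H) (R : ℕ → EuclideanSpace ℝ (Fin ℓ)) (d : ℕ → H) (α : ℕ → ℝ)
    (hR : ∀ n : ℕ, R n = y - T (f n))
    (hdmem : ∀ n : ℕ, d (n + 1) ∈ D)
    (hdne : ∀ n : ℕ, T (d (n + 1)) ≠ 0)
    (hgreedy : ∀ n : ℕ, ∀ e ∈ D, T e ≠ 0 →
      (⟪R n, T e⟫) ^ 2 / ‖T e‖ ^ 2 ≤
        (⟪R n, T (d (n + 1))⟫) ^ 2 / ‖T (d (n + 1))‖ ^ 2)
    (hα : ∀ n : ℕ, α (n + 1) = ⟪R n, T (d (n + 1))⟫ / ‖T (d (n + 1))‖ ^ 2)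
    (hα0 : Tendsto (fun n : ℕ => α (n + 1)) atTop (𝓝 0)) :
    ∀ e ∈ D, T e ≠ 0 →
      Tendsto (fun n : ℕ => ⟪R n, T e⟫) atTop (𝓝 0) :=
  rfmp_unregularized_residual_inner_tendsto_zero_general T D C₂ hC₂ R d α hdmem hdne hgreedy hα hα0
end
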